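/- For distinct a,b, the following identities hold in A(𝓗^+): [E^u_{ba}] = [Ē^u_{ba}], [E^t_{ba}] = [Ē^t_{ba}], and [Λ_{ab}] = [Λ_{ba}], where E^u_{ab} = 5S_{ab}(1,2)+25S_{ab}(1,3)+36S_{ab}(1,4)+16S_{ab}(1,5), Ē^u_{ba} = S_{ab}(1,1)+14S_{ab}(1,2)+41S_{ab}(1,3)+44S_{ab}(1,4)+16S_{ab}(1,5), E^t_{ab} = −16(3S_{ab}(1,2)+14S_{ab}(1,3)+19S_{ab}(1,4)+8S_{ab}(1,5)), Ē^t_{ba} = −16(5S_{ab}(1,2)+18S_{ab}(1,3)+21S_{ab}(1,4)+8S_{ab}(1,5)), and Λ_{ab} = 45S_{ab}(1,2)+190S_{ab}(1,3)+240S_{ab}(1,4)+96S_{ab}(1,5). -/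
import Mathlib


/-!
Common framework: vertex operator algebras over ℂ encoded via their modes,
weak/admissible/ordinary modules, twisted modules, Zhu's algebra data,
and the free bosonic (Heisenberg) vertex operator algebra `𝓗 = M(1)` of rank `ℓ`
together with its `θ`-fixed subalgebra `𝓗⁺`.
-/

open scoped BigOperators DirectSum TensorProduct

noncomputable section

/-- Generalized binomial coefficient `(q choose n)` for `q : ℚ`. -/
def qchoose (q : ℚ) : ℕ → ℚ
  | 0 => 1
  | n + 1 => qchoose q n * (q - n) / (n + 1)

/-- Generalized binomial coefficient of an integer, as a complex number. -/
def zchoose (m : ℤ) (n : ℕ) : ℂ := ((qchoose (m : ℚ) n : ℚ) : ℂ)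

/-- A vertex operator algebra over `ℂ`, encoded through its modes:
`Y u n : Module.End ℂ V` is the `n`-th mode `u_n` of the vertex operator `Y(u,z)`.
The axioms are: truncation, the vacuum and creation axioms, the (component form of
the) Jacobi/Borcherds identity, a lower-truncated `ℤ`-grading by `L(0)`-eigenvalues
with finite dimensional homogeneous pieces compatible with the modes, the Virasoro
relations for the conformal vector and the `L(-1)`-derivative (translation) axiom. -/
structure VOA (V : Type) [AddCommGroup V] [Module ℂ V] : Type where
  Y : V →ₗ[ℂ] ℤ → Module.End ℂ V
  one : V
  omega : V
  wt : ℤ → Submodule ℂ V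
  centralCharge : ℂ
  internal : DirectSum.IsInternal wt
  one_wt : one ∈ wt 0
  omega_wt : omega ∈ wt 2
  one_ne_zero : one ≠ 0
  fdim : ∀ n : ℤ, FiniteDimensional ℂ (wt n)
  bounded_below : ∃ N : ℤ, ∀ n : ℤ, n < N → wt n = ⊥
  trunc : ∀ u v : V, ∃ N : ℤ, ∀ n : ℤ, N ≤ n → Y u n v = 0
  vacuum_act : ∀ n : ℤ, Y one n = if n = -1 then (1 : Module.End ℂ V) else 0
  create : ∀ u : V, Y u (-1) one = u
  create_ge : ∀ (u : V) (n : ℤ), 0 ≤ n → Y u n one = 0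
  mode_wt : ∀ (k : ℤ) (u : V), u ∈ wt k → ∀ (m n : ℤ) (v : V), v ∈ wt m →
    Y u n v ∈ wt (m + k - n - 1)
  L0_diag : ∀ (n : ℤ) (v : V), v ∈ wt n → Y omega 1 v = (n : ℂ) • v
  translation : ∀ (u : V) (n : ℤ), Y (Y omega 0 u) n = (-(n : ℂ)) • Y u (n - 1)
  virasoro : ∀ m n : ℤ,
    Y omega (m + 1) * Y omega (n + 1) - Y omega (n + 1) * Y omega (m + 1)
      = ((m : ℂ) - (n : ℂ)) • Y omega (m + n + 1)
        + (if m + n = 0 then (((m ^ 3 - m : ℤ) : ℂ) / 12) * centralCharge else 0)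
            • (1 : Module.End ℂ V)
  borcherds : ∀ (u v w : V) (p m n : ℤ),
    ∑ᶠ i : ℕ, zchoose m i • Y (Y u (p + i) v) (m + n - i) w
      = ∑ᶠ i : ℕ, ((-1 : ℂ) ^ i * zchoose p i) •
          (Y u (m + p - i) (Y v (n + i) w)
            - ((-1 : ℂ) ^ p) • Y v (n + p - i) (Y u (m + i) w))

variable {V : Type} [AddCommGroup V] [Module ℂ V]

/-- Simplicity of a vertex operator algebra: the only subspaces invariant under
all modes are `0` and the whole space. -/
def VOA.Simple (A : VOA V) : Prop :=
  ∀ U : Submodule ℂ V, (∀ (u : V) (n : ℤ) (v : V), v ∈ U → A.Y u n v ∈ U) → U = ⊥ ∨ U = ⊤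

/-- The decomposition of a vertex operator algebra into its homogeneous pieces. -/
noncomputable def VOA.decompose (A : VOA V) : V ≃ₗ[ℂ] ⨁ n : ℤ, A.wt n :=
  (LinearEquiv.ofBijective (DirectSum.coeLinearMap A.wt) A.internal).symm

/-- The homogeneous component of weight `n` of a vector. -/
noncomputable def VOA.hcomp (A : VOA V) (n : ℤ) (u : V) : V := (A.decompose u n : V)

/-- Zhu's product `u * v` for `u` (treated as) homogeneous of weight `k`:
`u*v = ∑_{i≥0} (k choose i) u_{i-1} v`. -/
noncomputable def VOA.mulAux (A : VOA V) (k : ℤ) (u v : V) : V :=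
  ∑ᶠ i : ℕ, zchoose k i • A.Y u ((i : ℤ) - 1) v

/-- Zhu's circle product `u ∘ v` for `u` (treated as) homogeneous of weight `k`:
`u∘v = ∑_{i≥0} (k choose i) u_{i-2} v`. -/
noncomputable def VOA.circAux (A : VOA V) (k : ℤ) (u v : V) : V :=
  ∑ᶠ i : ℕ, zchoose k i • A.Y u ((i : ℤ) - 2) v

/-- Zhu's product `u * v`, extended bilinearly via homogeneous components of `u`. -/
noncomputable def VOA.star (A : VOA V) (u v : V) : V :=
  ∑ᶠ k : ℤ, A.mulAux k (A.hcomp k u) v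

/-- The subspace `O(V)` spanned by all circle products `u ∘ v` with `u` homogeneous;
Zhu's algebra is `A(V) = V/O(V)` with product induced by `VOA.star`. -/
def VOA.Osub (A : VOA V) : Submodule ℂ V :=
  Submodule.span ℂ {w | ∃ (k : ℤ) (u v : V), u ∈ A.wt k ∧ w = A.circAux k u v}

/-- A weak module for a vertex operator algebra, given by modes satisfying
truncation, the vacuum axiom and the Borcherds identity. -/
structure WkMod (A : VOA V) (M : Type) [AddCommGroup M] [Module ℂ M] : Type where
  act : V →ₗ[ℂ] ℤ → Module.End ℂ M
  trunc : ∀ (u : V) (w : M), ∃ N : ℤ, ∀ n : ℤ, N ≤ n → act u n w = 0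
  vacuum_act : ∀ n : ℤ, act A.one n = if n = -1 then (1 : Module.End ℂ M) else 0
  borcherds : ∀ (u v : V) (w : M) (p m n : ℤ),
    ∑ᶠ i : ℕ, zchoose m i • act (A.Y u (p + i) v) (m + n - i) w
      = ∑ᶠ i : ℕ, ((-1 : ℂ) ^ i * zchoose p i) •
          (act u (m + p - i) (act v (n + i) w)
            - ((-1 : ℂ) ^ p) • act v (n + p - i) (act u (m + i) w))

/-- An admissible (`ℕ`-gradable) module for a vertex operator algebra:
a weak module with an `ℕ`-grading with nonzero top level, compatible with weights. -/
structure AdmMod (A : VOA V) (M : Type) [AddCommGroup M] [Module ℂ M]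
    extends WkMod A M : Type where
  gr : ℕ → Submodule ℂ M
  grInternal : DirectSum.IsInternal gr
  top_ne_bot : gr 0 ≠ ⊥
  gr_mode : ∀ (k : ℤ) (u : V), u ∈ A.wt k → ∀ (m : ℤ) (n : ℕ) (w : M), w ∈ gr n →
    act u m w ∈
      if 0 ≤ (n : ℤ) + k - m - 1 then gr ((n : ℤ) + k - m - 1).toNat else ⊥

/-- An ordinary module for a vertex operator algebra: a weak module on which `L(0)`
acts semisimply with finite dimensional eigenspaces whose weights are truncated from
below in each coset `λ + ℤ`. -/
structure OrdMod (A : VOA V) (M : Type) [AddCommGroup M] [Module ℂ M]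
    extends WkMod A M : Type where
  wtm : ℂ → Submodule ℂ M
  indep : iSupIndep wtm
  spans : ⨆ c : ℂ, wtm c = ⊤
  L0_diag : ∀ (c : ℂ) (w : M), w ∈ wtm c → act A.omega 1 w = c • w
  fdim : ∀ c : ℂ, FiniteDimensional ℂ (wtm c)
  bounded_below : ∀ c : ℂ, ∃ N : ℤ, ∀ m : ℤ, m < N → wtm (c + m) = ⊥

/-- Irreducibility of a weak module. -/
def WkMod.Irreducible {A : VOA V} {M : Type} [AddCommGroup M] [Module ℂ M]
    (P : WkMod A M) : Prop :=
  (∃ w : M, w ≠ 0) ∧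
    ∀ U : Submodule ℂ M, (∀ (u : V) (n : ℤ) (w : M), w ∈ U → P.act u n w ∈ U) →
      U = ⊥ ∨ U = ⊤

/-- Isomorphism of two weak modules over the same vertex operator algebra. -/
def ModIso (A : VOA V) {M N : Type} [AddCommGroup M] [Module ℂ M]
    [AddCommGroup N] [Module ℂ N] (P : WkMod A M) (Q : WkMod A N) : Prop :=
  ∃ f : M ≃ₗ[ℂ] N, ∀ (u : V) (n : ℤ) (w : M), f (P.act u n w) = Q.act u n (f w)

/-- The action of the zero-mode `o(u) = u_{wt u - 1}` (extended linearly from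
homogeneous vectors) on a weak module; it preserves the top level of an
admissible module. -/
noncomputable def WkMod.oAct {A : VOA V} {M : Type} [AddCommGroup M] [Module ℂ M]
    (Q : WkMod A M) (u : V) (w : M) : M :=
  ∑ᶠ k : ℤ, Q.act (A.hcomp k u) (k - 1) w

/-- Action of a word of creation operators `h_{a_1}(-n_1) ⋯ h_{a_k}(-n_k)`. -/
def wordAct {ℓ : ℕ} {M : Type} (f : Fin ℓ → ℤ → M → M) : List (Fin ℓ × ℕ+) → M → M
  | [], w => w
  | (a, n) :: L, w => f a (-((n : ℕ) : ℤ)) (wordAct f L w)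

/-- Action of a word of twisted creation operators
`h_{a_1}(-n_1+1/2) ⋯ h_{a_k}(-n_k+1/2)` (indices doubled). -/
def twWordAct {ℓ : ℕ} {M : Type} (f : Fin ℓ → ℤ → M → M) : List (Fin ℓ × ℕ+) → M → M
  | [], w => w
  | (a, n) :: L, w => f a (-(2 * ((n : ℕ) : ℤ) - 1)) (twWordAct f L w)

/-- `A` is the rank `ℓ` free bosonic (Heisenberg) vertex operator algebra
`𝓗 = M(1)`, with generators `hgen a = h_a(-1)𝟏` for an orthonormal basis
`h_1, …, h_ℓ` of `𝔥`: the generators have weight one, their modes satisfy the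
Heisenberg commutation relations `[h_a(m), h_b(n)] = m δ_{ab} δ_{m+n,0}`, the
conformal vector is `ω = (1/2) ∑_a h_a(-1)²𝟏`, and `V` is spanned by the vectors
`h_{a_1}(-n_1) ⋯ h_{a_k}(-n_k)𝟏`. -/
structure IsHeisenberg {ℓ : ℕ} (A : VOA V) (hgen : Fin ℓ → V) : Prop where
  wt_one : ∀ a, hgen a ∈ A.wt 1
  heis_comm : ∀ (a b : Fin ℓ) (m n : ℤ),
    A.Y (hgen a) m * A.Y (hgen b) n - A.Y (hgen b) n * A.Y (hgen a) m
      = (if a = b ∧ m + n = 0 then (m : ℂ) else 0) • (1 : Module.End ℂ V)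
  omega_eq : A.omega
      = (1 / 2 : ℂ) • ∑ a : Fin ℓ, A.Y (hgen a) (-1) (A.Y (hgen a) (-1) A.one)
  span_words : Submodule.span ℂ
      {v : V | ∃ L : List (Fin ℓ × ℕ+),
        v = wordAct (fun a k w => A.Y (hgen a) k w) L A.one} = ⊤

/-- `θ` is the automorphism of the free bosonic vertex operator algebra induced
by `-1` on `𝔥`. -/
structure IsThetaAut {ℓ : ℕ} (A : VOA V) (hgen : Fin ℓ → V) (θ : V ≃ₗ[ℂ] V) : Prop where
  map_one : θ A.one = A.one
  map_omega : θ A.omega = A.omega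
  map_Y : ∀ (u : V) (n : ℤ) (v : V), θ (A.Y u n v) = A.Y (θ u) n (θ v)
  map_gen : ∀ a, θ (hgen a) = -hgen a
  map_wt : ∀ (k : ℤ) (v : V), v ∈ A.wt k → θ v ∈ A.wt k

/-- `B` (with underlying space `W`, embedded in `V` by `ι`) is the fixed point
vertex operator subalgebra `V^θ` of the involution `θ`. -/
structure IsFixedSubVOA {W : Type} [AddCommGroup W] [Module ℂ W]
    (A : VOA V) (θ : V ≃ₗ[ℂ] V) (B : VOA W) (ι : W →ₗ[ℂ] V) : Prop where
  inj : Function.Injective ι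
  range_eq : LinearMap.range ι
      = Module.End.eigenspace (θ.toLinearMap : Module.End ℂ V) 1
  map_one : ι B.one = A.one
  map_omega : ι B.omega = A.omega
  map_Y : ∀ (u : W) (n : ℤ) (v : W), ι (B.Y u n v) = A.Y (ι u) n (ι v)
  map_wt : ∀ (k : ℤ) (w : W), w ∈ B.wt k ↔ ι w ∈ A.wt k

/-- `P` is (isomorphic to) the Fock module `M(1,λ)` over the rank `ℓ` Heisenberg
vertex operator algebra: it has a nonzero vector `v₀` with `h_a(n)v₀ = 0` for
`n ≥ 1`, `h_a(0)v₀ = λ_a v₀`, which generates `M` under the creation operators. -/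
def IsFockModule {ℓ : ℕ} {M : Type} [AddCommGroup M] [Module ℂ M]
    (A : VOA V) (hgen : Fin ℓ → V) (P : WkMod A M) (lam : Fin ℓ → ℂ) : Prop :=
  ∃ v0 : M, v0 ≠ 0 ∧ (∀ (a : Fin ℓ) (n : ℤ), 1 ≤ n → P.act (hgen a) n v0 = 0) ∧
    (∀ a : Fin ℓ, P.act (hgen a) 0 v0 = lam a • v0) ∧
    Submodule.span ℂ {w : M | ∃ L : List (Fin ℓ × ℕ+),
      w = wordAct (fun a k x => P.act (hgen a) k x) L v0} = ⊤

/-- A weak `θ`-twisted module (for an involution `θ`): the modes are indexed by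
`(1/2)ℤ`, encoded here by doubling (so `act u k` is the mode `u_{k/2}`); on the
eigenspace `θ = (-1)^r` only modes with `k ≡ r (mod 2)` act, and the component
form of the twisted Jacobi identity holds. -/
structure TwMod (A : VOA V) (θ : V ≃ₗ[ℂ] V) (M : Type) [AddCommGroup M]
    [Module ℂ M] : Type where
  act : V →ₗ[ℂ] ℤ → Module.End ℂ M
  trunc : ∀ (u : V) (w : M), ∃ N : ℤ, ∀ n : ℤ, N ≤ n → act u n w = 0
  vacuum_act : ∀ n : ℤ, act A.one n = if n = -2 then (1 : Module.End ℂ M) else 0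
  moding : ∀ (u : V) (r : ℤ), θ u = ((-1 : ℂ) ^ r) • u →
    ∀ k : ℤ, (k - r) % 2 ≠ 0 → act u k = 0
  borcherds : ∀ (u v : V) (r s : ℤ), θ u = ((-1 : ℂ) ^ r) • u →
    θ v = ((-1 : ℂ) ^ s) • v → ∀ (w : M) (p K N : ℤ),
    ∑ᶠ i : ℕ, ((qchoose ((K : ℚ) / 2) i : ℚ) : ℂ) • act (A.Y u (p + i) v) (K + N - 2 * i) w
      = ∑ᶠ i : ℕ, ((-1 : ℂ) ^ i * zchoose p i) •
          (act u (K + 2 * p - 2 * i) (act v (N + 2 * i) w)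
            - ((-1 : ℂ) ^ p) • act v (N + 2 * p - 2 * i) (act u (K + 2 * i) w))

/-- Irreducibility of a twisted module. -/
def TwMod.Irreducible {A : VOA V} {θ : V ≃ₗ[ℂ] V} {M : Type} [AddCommGroup M]
    [Module ℂ M] (T : TwMod A θ M) : Prop :=
  (∃ w : M, w ≠ 0) ∧
    ∀ U : Submodule ℂ M, (∀ (u : V) (k : ℤ) (w : M), w ∈ U → T.act u k w ∈ U) →
      U = ⊥ ∨ U = ⊤

/-- `T` is (isomorphic to) the canonical irreducible `θ`-twisted module
`𝓗(θ) = S(𝔥 ⊗ t^{-1/2}ℂ[t^{-1/2}])` of the rank `ℓ` free bosonic vertex operator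
algebra: it has a nonzero vector killed by all modes `h_a(k/2)`, `k ≥ 1`, which
generates it under the twisted creation operators. -/
def IsCanonicalTwMod {ℓ : ℕ} {M : Type} [AddCommGroup M] [Module ℂ M]
    (A : VOA V) (hgen : Fin ℓ → V) {θ : V ≃ₗ[ℂ] V} (T : TwMod A θ M) : Prop :=
  ∃ v0 : M, v0 ≠ 0 ∧ (∀ (a : Fin ℓ) (k : ℤ), 1 ≤ k → T.act (hgen a) k v0 = 0) ∧
    Submodule.span ℂ {w : M | ∃ L : List (Fin ℓ × ℕ+),
      w = twWordAct (fun a k x => T.act (hgen a) k x) L v0} = ⊤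

/-- `σ` is the canonical involution of the twisted module `𝓗(θ)` (acting by
`(-1)^k` on monomials of length `k`): it is an involution compatible with `θ`
through the twisted action and fixing the lowest weight vectors. -/
def TwInvolution {ℓ : ℕ} {M : Type} [AddCommGroup M] [Module ℂ M]
    (A : VOA V) (hgen : Fin ℓ → V) {θ : V ≃ₗ[ℂ] V} (T : TwMod A θ M)
    (σ : M ≃ₗ[ℂ] M) : Prop :=
  (∀ w : M, σ (σ w) = w) ∧
  (∀ (u : V) (k : ℤ) (w : M), σ (T.act u k w) = T.act (θ u) k (σ w)) ∧
  (∀ v0 : M, (∀ (a : Fin ℓ) (k : ℤ), 1 ≤ k → T.act (hgen a) k v0 = 0) → σ v0 = v0)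

/-- The weak `B = V^θ`-module `Q` "is" the eigenspace `V^{(ε)}` of `θ` on `V`
(e.g. `𝓗⁺` itself for `ε = 1` and `𝓗⁻` for `ε = -1`), with action obtained by
restricting the vertex operators of `V`. -/
def IsEigenPartModule {W N : Type} [AddCommGroup W] [Module ℂ W]
    [AddCommGroup N] [Module ℂ N] (A : VOA V) (θ : V ≃ₗ[ℂ] V) {B : VOA W}
    (ι : W →ₗ[ℂ] V) (ε : ℂ) (Q : WkMod B N) : Prop :=
  ∃ j : N →ₗ[ℂ] V, Function.Injective j ∧
    LinearMap.range j = Module.End.eigenspace (θ.toLinearMap : Module.End ℂ V) ε ∧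
    ∀ (u : W) (n : ℤ) (w : N), j (Q.act u n w) = A.Y (ι u) n (j w)

/-- The weak `B = V^θ`-module `Q` "is" the eigenspace `𝓗(θ)^{(ε)}` of the
involution `σ` on the twisted module `𝓗(θ)`, with the restricted twisted action
(`u ∈ V^θ` acts by its integral modes). -/
def IsTwEigenPartModule {W MT N : Type} [AddCommGroup W] [Module ℂ W]
    [AddCommGroup MT] [Module ℂ MT] [AddCommGroup N] [Module ℂ N]
    (A : VOA V) {θ : V ≃ₗ[ℂ] V} {B : VOA W} (ι : W →ₗ[ℂ] V)
    (T : TwMod A θ MT) (σ : MT ≃ₗ[ℂ] MT) (ε : ℂ) (Q : WkMod B N) : Prop :=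
  ∃ j : N →ₗ[ℂ] MT, Function.Injective j ∧
    LinearMap.range j = Module.End.eigenspace (σ.toLinearMap : Module.End ℂ MT) ε ∧
    ∀ (u : W) (n : ℤ) (w : N), j (Q.act u n w) = T.act (ι u) (2 * n) (j w)

/-- The weak `B = 𝓗⁺`-module `Q` "is" the restriction to `𝓗⁺` of the Fock module
`M(1,λ)`. -/
def IsFockRestriction {ℓ : ℕ} {W N : Type} [AddCommGroup W] [Module ℂ W]
    [AddCommGroup N] [Module ℂ N] (A : VOA V) (hgen : Fin ℓ → V) {B : VOA W}
    (ι : W →ₗ[ℂ] V) (lam : Fin ℓ → ℂ) (Q : WkMod B N) : Prop :=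
  ∃ P : WkMod A N, IsFockModule A hgen P lam ∧
    ∀ (u : W) (n : ℤ), Q.act u n = P.act (ι u) n

/-- A realization of Zhu's algebra `A(V) = V/O(V)` of a vertex operator algebra
as an abstract associative `ℂ`-algebra `R`. -/
structure ZhuRealization (A : VOA V) (R : Type) [Ring R] [Algebra ℂ R] : Type where
  π : V →ₗ[ℂ] R
  surj : Function.Surjective π
  ker_eq : LinearMap.ker π = A.Osub
  map_star : ∀ u v : V, π (A.star u v) = π u * π v
  map_one : π A.one = 1

/-- The `R = A(V)`-module `M` "is" the top level `N(0)` of the admissible module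
`N`, where `[u] ∈ A(V)` acts on the top level by the zero-mode `o(u)`. -/
def IsTopLevelOf {R : Type} [Ring R] [Algebra ℂ R] {A : VOA V}
    (Z : ZhuRealization A R) {N : Type} [AddCommGroup N] [Module ℂ N]
    (Qa : AdmMod A N) (M : Type) [AddCommGroup M] [Module R M] : Prop :=
  ∃ f : M →+ N, Function.Injective f ∧ (∀ m : M, f m ∈ Qa.gr 0) ∧
    (∀ w ∈ Qa.gr 0, ∃ m : M, f m = w) ∧
    ∀ (u : V) (m : M), f (Z.π u • m) = Qa.toWkMod.oAct u (f m)

/-- Iterated Zhu product of a list of elements (an empty product is `[𝟏]`). -/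
noncomputable def starList (A : VOA V) : List V → V
  | [] => A.one
  | x :: L => A.star x (starList A L)

/-- The linear span of all Zhu-monomials in a set of generators; modulo `O(V)`
this is the subalgebra of `A(V)` generated by the images of the generators. -/
def genMonomials (A : VOA V) (gens : Set V) : Submodule ℂ V :=
  Submodule.span ℂ {w : V | ∃ L : List V, (∀ g ∈ L, g ∈ gens) ∧ w = starList A L}

/-- The subspace `𝓦^α ⊆ 𝓗` spanned by the monomials
`h_{a_1}(-n_1) ⋯ h_{a_k}(-n_k)𝟏` whose number of letters from `𝓗_c` is odd
exactly for `c ∈ α`; thus `wordSpanV A hgen ∅ = 𝓦 = 𝓗₁⁺ ⊗ ⋯ ⊗ 𝓗_ℓ⁺`. -/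
def wordSpanV {ℓ : ℕ} (A : VOA V) (hgen : Fin ℓ → V) (α : Finset (Fin ℓ)) :
    Submodule ℂ V :=
  Submodule.span ℂ {v : V | ∃ L : List (Fin ℓ × ℕ+),
    (∀ c : Fin ℓ, c ∈ α ↔ ¬ Even ((L.map Prod.fst).count c)) ∧
    v = wordAct (fun a k w => A.Y (hgen a) k w) L A.one}

/-- The element `S_{ab}(m,n) = h_a(-m)h_b(-n)𝟏` of `𝓗`. -/
def SV {ℓ : ℕ} (A : VOA V) (hgen : Fin ℓ → V) (a b : Fin ℓ) (m n : ℤ) : V :=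
  A.Y (hgen a) (-m) (A.Y (hgen b) (-n) A.one)

/-- The element `ω_a = (1/2) h_a(-1)²𝟏` of `𝓗⁺`. -/
def omegaV {ℓ : ℕ} (A : VOA V) (hgen : Fin ℓ → V) (a : Fin ℓ) : V :=
  (1 / 2 : ℂ) • SV A hgen a a 1 1

/-- The element `J_a = h_a(-1)⁴𝟏 - 2h_a(-3)h_a(-1)𝟏 + (3/2)h_a(-2)²𝟏` of `𝓗⁺`. -/
def JV {ℓ : ℕ} (A : VOA V) (hgen : Fin ℓ → V) (a : Fin ℓ) : V :=
  A.Y (hgen a) (-1) (A.Y (hgen a) (-1) (A.Y (hgen a) (-1) (A.Y (hgen a) (-1) A.one)))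
    - (2 : ℂ) • SV A hgen a a 3 1 + (3 / 2 : ℂ) • SV A hgen a a 2 2

variable {W : Type} [AddCommGroup W] [Module ℂ W]

/-- `E^u_{ab}` (for `a ≠ b`), as a combination of the `S_{ab}(1,m)`. -/
def EuW {ℓ : ℕ} (s : Fin ℓ → Fin ℓ → ℤ → ℤ → W) (a b : Fin ℓ) : W :=
  (5 : ℂ) • s a b 1 2 + (25 : ℂ) • s a b 1 3 + (36 : ℂ) • s a b 1 4 + (16 : ℂ) • s a b 1 5

/-- `E^t_{ab}` (for `a ≠ b`), as a combination of the `S_{ab}(1,m)`. -/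
def EtW {ℓ : ℕ} (s : Fin ℓ → Fin ℓ → ℤ → ℤ → W) (a b : Fin ℓ) : W :=
  (-16 : ℂ) • ((3 : ℂ) • s a b 1 2 + (14 : ℂ) • s a b 1 3 + (19 : ℂ) • s a b 1 4
    + (8 : ℂ) • s a b 1 5)

/-- `Λ_{ab}` (for `a ≠ b`), as a combination of the `S_{ab}(1,m)`. -/
def LamW {ℓ : ℕ} (s : Fin ℓ → Fin ℓ → ℤ → ℤ → W) (a b : Fin ℓ) : W :=
  (45 : ℂ) • s a b 1 2 + (190 : ℂ) • s a b 1 3 + (240 : ℂ) • s a b 1 4 + (96 : ℂ) • s a b 1 5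

/-- The full setting of the paper: `A = 𝓗` is the rank `ℓ` free bosonic vertex
operator algebra with Heisenberg generators `hgen`, `θ` is its `-1` involution,
and `B = 𝓗⁺` is the fixed point vertex operator subalgebra, embedded by `ι`. -/
structure HeisenbergPlusSetting (ℓ : ℕ) (V W : Type) [AddCommGroup V] [Module ℂ V]
    [AddCommGroup W] [Module ℂ W] : Type where
  A : VOA V
  hgen : Fin ℓ → V
  heis : IsHeisenberg A hgen
  θ : V ≃ₗ[ℂ] V
  thetaAut : IsThetaAut A hgen θ
  B : VOA W
  ι : W →ₗ[ℂ] V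
  fixedSub : IsFixedSubVOA A θ B ι

/-- Bundled weak module over a vertex operator algebra. -/
structure ARep (A : VOA V) : Type 1 where
  carrier : Type
  [acg : AddCommGroup carrier]
  [mod : Module ℂ carrier]
  str : WkMod A carrier

attribute [instance] ARep.acg ARep.mod

/-- Bundled admissible module over a vertex operator algebra. -/
structure BRep (A : VOA V) : Type 1 where
  carrier : Type
  [acg : AddCommGroup carrier]
  [mod : Module ℂ carrier]
  adm : AdmMod A carrier

attribute [instance] BRep.acg BRep.mod

/-- Bundled twisted module over a vertex operator algebra with involution. -/
structure TwRep (A : VOA V) (θ : V ≃ₗ[ℂ] V) : Type 1 where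
  carrier : Type
  [acg : AddCommGroup carrier]
  [mod : Module ℂ carrier]
  str : TwMod A θ carrier

attribute [instance] TwRep.acg TwRep.mod

end

noncomputable section AuxLemmas

variable {V : Type} [AddCommGroup V] [Module ℂ V]

lemma zchoose_zero' (k : ℤ) : zchoose k 0 = 1 := by
  simp [zchoose, qchoose]

lemma zchoose_one' (k : ℤ) : zchoose k 1 = (k : ℂ) := by
  simp [zchoose, qchoose]

lemma qchoose_zero_left (n : ℕ) : qchoose 0 (n + 1) = 0 := by
  induction n with
  | zero => norm_num [qchoose]
  | succ m ih => rw [qchoose, ih, zero_mul, zero_div]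

lemma zchoose_zero_left (n : ℕ) : zchoose 0 (n + 1) = 0 := by
  simp [zchoose, qchoose_zero_left]

/-- `L(-1)` is a derivation w.r.t. the modes. -/
lemma Lder (A : VOA V) (x : V) (n : ℤ) (w : V) :
    A.Y A.omega 0 (A.Y x n w)
      = A.Y x n (A.Y A.omega 0 w) + (-(n : ℂ)) • A.Y x (n - 1) w := by
  have H := A.borcherds A.omega x w 0 0 n
  rw [finsum_eq_single _ 0 ?h1, finsum_eq_single _ 0 ?h2] at H
  case h1 =>
    intro i hi
    obtain ⟨j, rfl⟩ := Nat.exists_eq_succ_of_ne_zero hi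
    rw [zchoose_zero_left, zero_smul]
  case h2 =>
    intro i hi
    obtain ⟨j, rfl⟩ := Nat.exists_eq_succ_of_ne_zero hi
    rw [zchoose_zero_left, mul_zero, zero_smul]
  simp only [Nat.cast_zero, add_zero, zero_add, sub_zero, pow_zero, zpow_zero,
    one_mul, one_smul, zchoose_zero'] at H
  have T := A.translation x n
  rw [T, LinearMap.smul_apply, eq_sub_iff_add_eq] at H
  rw [← H]
  exact add_comm _ _

/-- Evaluation of the circle product with the vacuum. -/
lemma circ_one (A : VOA V) (k : ℤ) (u : V) :
    A.circAux k u A.one = A.Y A.omega 0 u + (k : ℂ) • u := by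
  have hY2 : A.Y u (-2) A.one = A.Y A.omega 0 u := by
    have T := LinearMap.congr_fun (A.translation u (-1)) A.one
    rw [A.create, LinearMap.smul_apply] at T
    norm_num at T
    exact T.symm
  have hsupp : Function.support
      (fun i : ℕ => zchoose k i • A.Y u ((i : ℤ) - 2) A.one)
        ⊆ (({0, 1} : Finset ℕ) : Set ℕ) := by
    intro i hi
    simp only [Function.mem_support, ne_eq] at hi
    by_contra hmem
    simp only [Finset.coe_insert, Set.mem_insert_iff, Finset.coe_singleton,
      Set.mem_singleton_iff] at hmem
    push_neg at hmem
    apply hi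
    have h2 : (0 : ℤ) ≤ (i : ℤ) - 2 := by
      have : (2 : ℕ) ≤ i := by omega
      have : (2 : ℤ) ≤ (i : ℤ) := by exact_mod_cast this
      omega
    rw [A.create_ge u _ h2, smul_zero]
  rw [show A.circAux k u A.one
      = ∑ᶠ i : ℕ, zchoose k i • A.Y u ((i : ℤ) - 2) A.one from rfl,
     finsum_eq_sum_of_support_subset _ hsupp,
    Finset.sum_pair (by norm_num : (0 : ℕ) ≠ 1)]
  norm_num [zchoose_zero', zchoose_one', A.create, hY2]

lemma omem (A : VOA V) (k : ℤ) (u : V) (hu : u ∈ A.wt k) :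
    A.Y A.omega 0 u + (k : ℂ) • u ∈ A.Osub := by
  rw [← circ_one A k u]
  exact Submodule.subset_span ⟨k, u, A.one, hu, rfl⟩

lemma SVsym {ℓ : ℕ} (A : VOA V) (hg : Fin ℓ → V)
    (hc : ∀ (a b : Fin ℓ) (m n : ℤ),
      A.Y (hg a) m * A.Y (hg b) n - A.Y (hg b) n * A.Y (hg a) m
        = (if a = b ∧ m + n = 0 then (m : ℂ) else 0) • (1 : Module.End ℂ V))
    (a b : Fin ℓ) (hab : a ≠ b) (m n : ℤ) :
    SV A hg a b m n = SV A hg b a n m := by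
  have h := hc a b (-m) (-n)
  rw [if_neg (by rintro ⟨h1, -⟩; exact hab h1), zero_smul] at h
  have h3 := LinearMap.congr_fun (sub_eq_zero.mp h) A.one
  simpa [SV, Module.End.mul_apply] using h3

lemma SVwt {ℓ : ℕ} (A : VOA V) (hg : Fin ℓ → V) (h1 : ∀ c, hg c ∈ A.wt 1)
    (a b : Fin ℓ) (m n : ℤ) : SV A hg a b m n ∈ A.wt (m + n) := by
  have hb := A.mode_wt 1 (hg b) (h1 b) 0 (-n) A.one A.one_wt
  rw [show (0 + 1 - (-n) - 1 : ℤ) = n from by ring] at hb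
  have ha := A.mode_wt 1 (hg a) (h1 a) n (-m) _ hb
  rw [show (n + 1 - (-m) - 1 : ℤ) = m + n from by ring] at ha
  exact ha

lemma SVder {ℓ : ℕ} (A : VOA V) (hg : Fin ℓ → V) (a b : Fin ℓ) (m n : ℤ) :
    A.Y A.omega 0 (SV A hg a b m n)
      = (m : ℂ) • SV A hg a b (m + 1) n + (n : ℂ) • SV A hg a b m (n + 1) := by
  have hone : A.Y A.omega 0 A.one = 0 := A.create_ge A.omega 0 le_rfl
  unfold SV
  rw [Lder, Lder, hone,
    show (-n - 1 : ℤ) = -(n + 1) from by ring,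
    show (-m - 1 : ℤ) = -(m + 1) from by ring]
  simp only [map_zero, zero_add, map_smul]
  push_cast
  module

end AuxLemmas

/-- Lemma 5.1.1. For distinct `a,b`, in `A(𝓗⁺)`:
`[E^u_{ba}] = [Ē^u_{ba}]`, `[E^t_{ba}] = [Ē^t_{ba}]` and `[Λ_{ab}] = [Λ_{ba}]`,
where `Ē^u_{ba} = S_{ab}(1,1) + 14S_{ab}(1,2) + 41S_{ab}(1,3) + 44S_{ab}(1,4)
+ 16S_{ab}(1,5)` and
`Ē^t_{ba} = -16(5S_{ab}(1,2) + 18S_{ab}(1,3) + 21S_{ab}(1,4) + 8S_{ab}(1,5))`. -/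
theorem statement14 (ℓ : ℕ) {V W : Type} [AddCommGroup V] [Module ℂ V]
    [AddCommGroup W] [Module ℂ W] (S : HeisenbergPlusSetting ℓ V W)
    (s : Fin ℓ → Fin ℓ → ℤ → ℤ → W)
    (hs : ∀ a b m n, S.ι (s a b m n) = SV S.A S.hgen a b m n)
    (a b : Fin ℓ) (hab : a ≠ b) :
    (EuW s b a
      - (s a b 1 1 + (14 : ℂ) • s a b 1 2 + (41 : ℂ) • s a b 1 3
          + (44 : ℂ) • s a b 1 4 + (16 : ℂ) • s a b 1 5) ∈ S.B.Osub) ∧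
    (EtW s b a
      - (-16 : ℂ) • ((5 : ℂ) • s a b 1 2 + (18 : ℂ) • s a b 1 3
          + (21 : ℂ) • s a b 1 4 + (8 : ℂ) • s a b 1 5) ∈ S.B.Osub) ∧
    (LamW s a b - LamW s b a ∈ S.B.Osub) := by
  have hsym : ∀ m n : ℤ, s b a m n = s a b n m := by
    intro m n
    apply S.fixedSub.inj
    rw [hs, hs]
    exact SVsym S.A S.hgen S.heis.heis_comm b a hab.symm m n
  have hwt : ∀ m n : ℤ, s a b m n ∈ S.B.wt (m + n) := by
    intro m n
    rw [S.fixedSub.map_wt, hs]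
    exact SVwt S.A S.hgen S.heis.wt_one a b m n
  have hYom : ∀ m n : ℤ, S.B.Y S.B.omega 0 (s a b m n)
      = (m : ℂ) • s a b (m + 1) n + (n : ℂ) • s a b m (n + 1) := by
    intro m n
    apply S.fixedSub.inj
    simp only [S.fixedSub.map_Y, S.fixedSub.map_omega, map_add, map_smul, hs]
    exact SVder S.A S.hgen a b m n
  have hRel : ∀ m n : ℤ, (m : ℂ) • s a b (m + 1) n + (n : ℂ) • s a b m (n + 1)
      + ((m + n : ℤ) : ℂ) • s a b m n ∈ S.B.Osub := by
    intro m n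
    have h := omem S.B (m + n) (s a b m n) (hwt m n)
    rw [hYom m n] at h
    exact h
  have hRel' : ∀ (m n m' n' : ℤ) (cm cn cs : ℂ), m' = m + 1 → n' = n + 1 →
      cm = (m : ℂ) → cn = (n : ℂ) → cs = ((m + n : ℤ) : ℂ) →
      cm • s a b m' n + cn • s a b m n' + cs • s a b m n ∈ S.B.Osub := by
    rintro m n _ _ _ _ _ rfl rfl rfl rfl rfl
    exact hRel m n
  have r11 : ((1:ℂ) • s a b 2 1 + (1:ℂ) • s a b 1 2 + (2:ℂ) • s a b 1 1) ∈ S.B.Osub :=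
    hRel' 1 1 2 2 1 1 2 (by norm_num) (by norm_num) (by norm_num) (by norm_num) (by norm_num)
  have r12 : ((1:ℂ) • s a b 2 2 + (2:ℂ) • s a b 1 3 + (3:ℂ) • s a b 1 2) ∈ S.B.Osub :=
    hRel' 1 2 2 3 1 2 3 (by norm_num) (by norm_num) (by norm_num) (by norm_num) (by norm_num)
  have r13 : ((1:ℂ) • s a b 2 3 + (3:ℂ) • s a b 1 4 + (4:ℂ) • s a b 1 3) ∈ S.B.Osub :=
    hRel' 1 3 2 4 1 3 4 (by norm_num) (by norm_num) (by norm_num) (by norm_num) (by norm_num)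
  have r14 : ((1:ℂ) • s a b 2 4 + (4:ℂ) • s a b 1 5 + (5:ℂ) • s a b 1 4) ∈ S.B.Osub :=
    hRel' 1 4 2 5 1 4 5 (by norm_num) (by norm_num) (by norm_num) (by norm_num) (by norm_num)
  have r21 : ((2:ℂ) • s a b 3 1 + (1:ℂ) • s a b 2 2 + (3:ℂ) • s a b 2 1) ∈ S.B.Osub :=
    hRel' 2 1 3 2 2 1 3 (by norm_num) (by norm_num) (by norm_num) (by norm_num) (by norm_num)
  have r22 : ((2:ℂ) • s a b 3 2 + (2:ℂ) • s a b 2 3 + (4:ℂ) • s a b 2 2) ∈ S.B.Osub :=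
    hRel' 2 2 3 3 2 2 4 (by norm_num) (by norm_num) (by norm_num) (by norm_num) (by norm_num)
  have r23 : ((2:ℂ) • s a b 3 3 + (3:ℂ) • s a b 2 4 + (5:ℂ) • s a b 2 3) ∈ S.B.Osub :=
    hRel' 2 3 3 4 2 3 5 (by norm_num) (by norm_num) (by norm_num) (by norm_num) (by norm_num)
  have r31 : ((3:ℂ) • s a b 4 1 + (1:ℂ) • s a b 3 2 + (4:ℂ) • s a b 3 1) ∈ S.B.Osub :=
    hRel' 3 1 4 2 3 1 4 (by norm_num) (by norm_num) (by norm_num) (by norm_num) (by norm_num)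
  have r32 : ((3:ℂ) • s a b 4 2 + (2:ℂ) • s a b 3 3 + (5:ℂ) • s a b 3 2) ∈ S.B.Osub :=
    hRel' 3 2 4 3 3 2 5 (by norm_num) (by norm_num) (by norm_num) (by norm_num) (by norm_num)
  have r41 : ((4:ℂ) • s a b 5 1 + (1:ℂ) • s a b 4 2 + (5:ℂ) • s a b 4 1) ∈ S.B.Osub :=
    hRel' 4 1 5 2 4 1 5 (by norm_num) (by norm_num) (by norm_num) (by norm_num) (by norm_num)

  refine ⟨?_, ?_, ?_⟩
  · have hE1 : EuW s b a
        - (s a b 1 1 + (14 : ℂ) • s a b 1 2 + (41 : ℂ) • s a b 1 3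
            + (44 : ℂ) • s a b 1 4 + (16 : ℂ) • s a b 1 5) =
        ((-1:ℂ)/2) • ((1:ℂ) • s a b 2 1 + (1:ℂ) • s a b 1 2 + (2:ℂ) • s a b 1 1) +
        ((-9:ℂ)/2) • ((1:ℂ) • s a b 2 2 + (2:ℂ) • s a b 1 3 + (3:ℂ) • s a b 1 2) +
        (-8:ℂ) • ((1:ℂ) • s a b 2 3 + (3:ℂ) • s a b 1 4 + (4:ℂ) • s a b 1 3) +
        (-4:ℂ) • ((1:ℂ) • s a b 2 4 + (4:ℂ) • s a b 1 5 + (5:ℂ) • s a b 1 4) +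
        ((11:ℂ)/6) • ((2:ℂ) • s a b 3 1 + (1:ℂ) • s a b 2 2 + (3:ℂ) • s a b 2 1) +
        ((2:ℂ)/3) • ((2:ℂ) • s a b 3 2 + (2:ℂ) • s a b 2 3 + (4:ℂ) • s a b 2 2) +
        ((4:ℂ)/3) • ((2:ℂ) • s a b 3 3 + (3:ℂ) • s a b 2 4 + (5:ℂ) • s a b 2 3) +
        ((16:ℂ)/3) • ((3:ℂ) • s a b 4 1 + (1:ℂ) • s a b 3 2 + (4:ℂ) • s a b 3 1) +
        ((-4:ℂ)/3) • ((3:ℂ) • s a b 4 2 + (2:ℂ) • s a b 3 3 + (5:ℂ) • s a b 3 2) +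
        (4:ℂ) • ((4:ℂ) • s a b 5 1 + (1:ℂ) • s a b 4 2 + (5:ℂ) • s a b 4 1) := by
      simp only [EuW, EtW, LamW, hsym]
      module
    rw [hE1]
    exact add_mem (add_mem (add_mem (add_mem (add_mem (add_mem (add_mem (add_mem (add_mem (Submodule.smul_mem _ _ r11) (Submodule.smul_mem _ _ r12)) (Submodule.smul_mem _ _ r13)) (Submodule.smul_mem _ _ r14)) (Submodule.smul_mem _ _ r21)) (Submodule.smul_mem _ _ r22)) (Submodule.smul_mem _ _ r23)) (Submodule.smul_mem _ _ r31)) (Submodule.smul_mem _ _ r32)) (Submodule.smul_mem _ _ r41)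
  · have hE2 : EtW s b a
        - (-16 : ℂ) • ((5 : ℂ) • s a b 1 2 + (18 : ℂ) • s a b 1 3
            + (21 : ℂ) • s a b 1 4 + (8 : ℂ) • s a b 1 5) =
        ((80:ℂ)/3) • ((1:ℂ) • s a b 2 2 + (2:ℂ) • s a b 1 3 + (3:ℂ) • s a b 1 2) +
        ((176:ℂ)/3) • ((1:ℂ) • s a b 2 3 + (3:ℂ) • s a b 1 4 + (4:ℂ) • s a b 1 3) +
        (32:ℂ) • ((1:ℂ) • s a b 2 4 + (4:ℂ) • s a b 1 5 + (5:ℂ) • s a b 1 4) +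
        (-16:ℂ) • ((2:ℂ) • s a b 3 1 + (1:ℂ) • s a b 2 2 + (3:ℂ) • s a b 2 1) +
        ((-8:ℂ)/3) • ((2:ℂ) • s a b 3 2 + (2:ℂ) • s a b 2 3 + (4:ℂ) • s a b 2 2) +
        ((-32:ℂ)/3) • ((2:ℂ) • s a b 3 3 + (3:ℂ) • s a b 2 4 + (5:ℂ) • s a b 2 3) +
        (-48:ℂ) • ((3:ℂ) • s a b 4 1 + (1:ℂ) • s a b 3 2 + (4:ℂ) • s a b 3 1) +
        ((32:ℂ)/3) • ((3:ℂ) • s a b 4 2 + (2:ℂ) • s a b 3 3 + (5:ℂ) • s a b 3 2) +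
        (-32:ℂ) • ((4:ℂ) • s a b 5 1 + (1:ℂ) • s a b 4 2 + (5:ℂ) • s a b 4 1) := by
      simp only [EuW, EtW, LamW, hsym]
      module
    rw [hE2]
    exact add_mem (add_mem (add_mem (add_mem (add_mem (add_mem (add_mem (add_mem (Submodule.smul_mem _ _ r12) (Submodule.smul_mem _ _ r13)) (Submodule.smul_mem _ _ r14)) (Submodule.smul_mem _ _ r21)) (Submodule.smul_mem _ _ r22)) (Submodule.smul_mem _ _ r23)) (Submodule.smul_mem _ _ r31)) (Submodule.smul_mem _ _ r32)) (Submodule.smul_mem _ _ r41)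
  · have hE3 : LamW s a b - LamW s b a =
        (15:ℂ) • ((1:ℂ) • s a b 2 2 + (2:ℂ) • s a b 1 3 + (3:ℂ) • s a b 1 2) +
        (40:ℂ) • ((1:ℂ) • s a b 2 3 + (3:ℂ) • s a b 1 4 + (4:ℂ) • s a b 1 3) +
        (24:ℂ) • ((1:ℂ) • s a b 2 4 + (4:ℂ) • s a b 1 5 + (5:ℂ) • s a b 1 4) +
        (-15:ℂ) • ((2:ℂ) • s a b 3 1 + (1:ℂ) • s a b 2 2 + (3:ℂ) • s a b 2 1) +
        (-8:ℂ) • ((2:ℂ) • s a b 3 3 + (3:ℂ) • s a b 2 4 + (5:ℂ) • s a b 2 3) +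
        (-40:ℂ) • ((3:ℂ) • s a b 4 1 + (1:ℂ) • s a b 3 2 + (4:ℂ) • s a b 3 1) +
        (8:ℂ) • ((3:ℂ) • s a b 4 2 + (2:ℂ) • s a b 3 3 + (5:ℂ) • s a b 3 2) +
        (-24:ℂ) • ((4:ℂ) • s a b 5 1 + (1:ℂ) • s a b 4 2 + (5:ℂ) • s a b 4 1) := by
      simp only [EuW, EtW, LamW, hsym]
      module
    rw [hE3]
    exact add_mem (add_mem (add_mem (add_mem (add_mem (add_mem (add_mem (Submodule.smul_mem _ _ r12) (Submodule.smul_mem _ _ r13)) (Submodule.smul_mem _ _ r14)) (Submodule.smul_mem _ _ r21)) (Submodule.smul_mem _ _ r23)) (Submodule.smul_mem _ _ r31)) (Submodule.smul_mem _ _ r32)) (Submodule.smul_mem _ _ r41)
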